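/- Let V be a Hilbert space and W, Z closed linear subspaces with V = W ⊕ Z (internal direct sum, i.e. W + Z = V and W ∩ Z = {0}). Then the operator norm of the composition of orthogonal projections Π_W ∘ Π_Z satisfies ‖Π_W Π_Z‖ ≤ c for some constant 0 ≤ c < 1. -/

import Mathlib

/-!
A closed complement `W` of a closed subspace `Z` of a Banach space comes with a bounded projection
`P` onto `Z` along `W`, so `‖z‖ = ‖P (z - w)‖ ≤ C ‖z - w‖` for `z ∈ Z`, `w ∈ W`: the subspaces meet
at a positive angle. In a Hilbert space, Pythagoras then gives
`‖Π_W z‖² = ‖z‖² - ‖z - Π_W z‖² ≤ (1 - 1/C²) ‖z‖²` for `z ∈ Z`, whence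
`‖Π_W Π_Z‖ ≤ √(1 - 1/C²) < 1`.
-/

namespace Submodule

theorem IsTopCompl.exists_norm_le_mul_norm_sub {𝕜 E : Type*} [NontriviallyNormedField 𝕜]
    [SeminormedAddCommGroup E] [NormedSpace 𝕜 E] {p q : Submodule 𝕜 E} (h : IsTopCompl p q) :
    ∃ C : ℝ, 0 < C ∧ ∀ x ∈ p, ∀ y ∈ q, ‖x‖ ≤ C * ‖x - y‖ := by
  refine ⟨max 1 ‖p.projectionL q h‖, by positivity, fun x hx y hy => ?_⟩
  have hproj : p.projectionL q h (x - y) = x := by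
    rw [map_sub, projectionL_apply_left h ⟨x, hx⟩, projectionL_apply_eq_zero_of_mem_right h hy,
      sub_zero]
  calc ‖x‖ = ‖p.projectionL q h (x - y)‖ := by rw [hproj]
    _ ≤ ‖p.projectionL q h‖ * ‖x - y‖ := (p.projectionL q h).le_opNorm _
    _ ≤ max 1 ‖p.projectionL q h‖ * ‖x - y‖ := by gcongr; exact le_max_right _ _

variable {𝕜 E : Type*} [RCLike 𝕜] [NormedAddCommGroup E] [InnerProductSpace 𝕜 E]

theorem norm_starProjection_le_of_norm_le_mul_norm_sub (K : Submodule 𝕜 E)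
    [K.HasOrthogonalProjection] {x : E} {C : ℝ} (hC : 0 < C)
    (hx : ‖x‖ ≤ C * ‖x - K.starProjection x‖) :
    ‖K.starProjection x‖ ≤ √(1 - 1 / C ^ 2) * ‖x‖ := by
  have hpyth : ‖x‖ ^ 2 = ‖K.starProjection x‖ ^ 2 + ‖x - K.starProjection x‖ ^ 2 := by
    rw [← starProjection_orthogonal_val]
    exact norm_sq_eq_add_norm_sq_starProjection x K
  have hsq : ‖K.starProjection x‖ ^ 2 ≤ (1 - 1 / C ^ 2) * ‖x‖ ^ 2 := by
    have : ‖x‖ ^ 2 ≤ C ^ 2 * ‖x - K.starProjection x‖ ^ 2 := by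
      rw [← mul_pow]; gcongr
    field_simp
    nlinarith
  rw [← Real.sqrt_sq (norm_nonneg x), ← Real.sqrt_mul' _ (sq_nonneg _)]
  exact Real.le_sqrt_of_sq_le hsq

theorem norm_starProjection_comp_starProjection_le (Z K : Submodule 𝕜 E)
    [Z.HasOrthogonalProjection] [K.HasOrthogonalProjection] {C : ℝ} (hC : 0 < C)
    (hZK : ∀ z ∈ Z, ∀ w ∈ K, ‖z‖ ≤ C * ‖z - w‖) :
    ‖K.starProjection ∘L Z.starProjection‖ ≤ √(1 - 1 / C ^ 2) := by
  refine ContinuousLinearMap.opNorm_le_bound _ (Real.sqrt_nonneg _) fun v => ?_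
  have hz := hZK (Z.starProjection v) (Z.starProjection_apply_mem v)
    (K.starProjection (Z.starProjection v)) (K.starProjection_apply_mem _)
  calc ‖K.starProjection (Z.starProjection v)‖
      ≤ √(1 - 1 / C ^ 2) * ‖Z.starProjection v‖ :=
        K.norm_starProjection_le_of_norm_le_mul_norm_sub hC hz
    _ ≤ √(1 - 1 / C ^ 2) * ‖v‖ := by gcongr; exact Z.norm_starProjection_apply_le v

end Submodule

theorem stmt_0 {V : Type*} [NormedAddCommGroup V] [InnerProductSpace ℝ V] [CompleteSpace V]
    (W Z : Submodule ℝ V) [CompleteSpace W] [CompleteSpace Z]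
    (hsum : W ⊔ Z = ⊤) (hinter : W ⊓ Z = ⊥) :
    ∃ c : ℝ, 0 ≤ c ∧ c < 1 ∧
      ‖(W.subtypeL.comp W.orthogonalProjectionOnto).comp
        (Z.subtypeL.comp Z.orthogonalProjectionOnto)‖ ≤ c := by
  have hcompl : IsCompl Z W := (IsCompl.of_eq hinter hsum).symm
  have hclosed (K : Submodule ℝ V) [CompleteSpace K] : IsClosed (K : Set V) :=
    (completeSpace_coe_iff_isComplete.1 ‹_›).isClosed
  obtain ⟨C, hC, hZW⟩ := (Submodule.IsCompl.isTopCompl_of_isClosed hcompl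
    (hclosed Z) (hclosed W)).exists_norm_le_mul_norm_sub
  refine ⟨√(1 - 1 / C ^ 2), Real.sqrt_nonneg _, ?_,
    Z.norm_starProjection_comp_starProjection_le W hC hZW⟩
  rw [Real.sqrt_lt' one_pos]
  have : 0 < 1 / C ^ 2 := by positivity
  linarith
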